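/- arXiv:math/0604442 — 3 statements merged into one kernel-verified Lean document; each statement's English description precedes it below -/
import Mathlib

section
/- A presheaf X on the category Θ₀ of trees is a sheaf for the topology generated by epimorphic families if and only if for every tree T the canonical map Hom(T, X) → lim_{n̄ → T} Hom(n̄, X) is a bijection, where the limit is over all maps from linear trees n̄ into T. -/
open CategoryTheory CategoryTheory.Limits

/-- An `ω`-graph (globular set): a presheaf on the globe category, presented concretely
as a family of cell sets with source and target maps satisfying the globular identities. -/
structure OmegaGraph : Type 1 where
  cells : ℕ → Type
  src : ∀ n, cells (n + 1) → cells n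
  tgt : ∀ n, cells (n + 1) → cells n
  src_src : ∀ n x, src n (src (n + 1) x) = src n (tgt (n + 1) x)
  tgt_tgt : ∀ n x, tgt n (src (n + 1) x) = tgt n (tgt (n + 1) x)

/-- Morphisms of `ω`-graphs. -/
@[ext]
structure OmegaGraph.Hom (X Y : OmegaGraph) where
  app : ∀ n, X.cells n → Y.cells n
  app_src : ∀ n x, app n (X.src n x) = Y.src n (app (n + 1) x)
  app_tgt : ∀ n x, app n (X.tgt n x) = Y.tgt n (app (n + 1) x)

instance : Category OmegaGraph where
  Hom := OmegaGraph.Hom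
  id X := ⟨fun _ x => x, fun _ _ => rfl, fun _ _ => rfl⟩
  comp f g := ⟨fun n x => g.app n (f.app n x),
    fun n x => by rw [f.app_src, g.app_src],
    fun n x => by rw [f.app_tgt, g.app_tgt]⟩
  id_comp _ := rfl
  comp_id _ := rfl
  assoc _ _ _ := rfl

/-- The cells of the `N`-globe `n̄`: one pair of parallel cells in every dimension
`k < N` and a single top cell in dimension `N`. -/
inductive GlobeCell (N : ℕ) : ℕ → Type
  | s (k : ℕ) : k < N → GlobeCell N k
  | t (k : ℕ) : k < N → GlobeCell N k
  | top (k : ℕ) : k = N → GlobeCell N k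

/-- The linear tree (globe) `n̄`, i.e. the `ω`-graph represented by `n̄`. -/
def globe (N : ℕ) : OmegaGraph where
  cells k := GlobeCell N k
  src k x := match x with
    | .s _ h => .s k (Nat.lt_of_succ_lt h)
    | .t _ h => .s k (Nat.lt_of_succ_lt h)
    | .top _ h => .s k (h ▸ Nat.lt_succ_self k)
  tgt k x := match x with
    | .s _ h => .t k (Nat.lt_of_succ_lt h)
    | .t _ h => .t k (Nat.lt_of_succ_lt h)
    | .top _ h => .t k (h ▸ Nat.lt_succ_self k)
  src_src n x := by cases x <;> rfl
  tgt_tgt n x := by cases x <;> rfl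

/-- The elementary relations generating the preorder `≤_X` on the cells of an `ω`-graph:
`s*(x) ≤ x` and `x ≤ t*(x)`. -/
def OmegaGraph.CellStep (X : OmegaGraph) : (Σ n, X.cells n) → (Σ n, X.cells n) → Prop :=
  fun a b =>
    (∃ n, ∃ x : X.cells (n + 1), a = ⟨n, X.src n x⟩ ∧ b = ⟨n + 1, x⟩) ∨
    (∃ n, ∃ x : X.cells (n + 1), a = ⟨n + 1, x⟩ ∧ b = ⟨n, X.tgt n x⟩)

/-- The preorder `≤_X` on the cells of an `ω`-graph generated by `s*(x) ≤ x ≤ t*(x)`. -/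
def OmegaGraph.cellLE (X : OmegaGraph) : (Σ n, X.cells n) → (Σ n, X.cells n) → Prop :=
  Relation.ReflTransGen X.CellStep

/-- A (finite planar level) tree: a nonempty `ω`-graph with finitely many cells in total,
whose cell preorder `≤` is a total order. -/
def OmegaGraph.IsTree (X : OmegaGraph) : Prop :=
  Nonempty (Σ n, X.cells n) ∧ Finite (Σ n, X.cells n) ∧
    (∀ a b, X.cellLE a b ∨ X.cellLE b a) ∧
    (∀ a b, X.cellLE a b → X.cellLE b a → a = b)

/-- A tree is linear if it is isomorphic to a globe `n̄`. -/
def OmegaGraph.IsLinear (X : OmegaGraph) : Prop :=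
  ∃ N, Nonempty (X ≅ globe N)

/-- The category `Θ₀` of trees: the full subcategory of `ω`-graphs spanned by trees. -/
abbrev TreeCat := ObjectProperty.FullSubcategory OmegaGraph.IsTree

open Opposite

/-- A sieve on a tree `T` is covering when its member family is jointly epimorphic, i.e.
when the induced map from the coproduct of its domains to `T` is an epimorphism of
`ω`-graphs (equivalently, the family is jointly surjective on cells). -/
def CoveringSieve (T : TreeCat) (S : Sieve T) : Prop :=
  ∀ (n : ℕ) (x : T.obj.cells n), ∃ (W : TreeCat) (f : W ⟶ T),
    S.arrows f ∧ ∃ y : W.obj.cells n, f.hom.app n y = x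

/-- Compatible families on `X` indexed by the maps from linear trees (globes) into `T`;
this is the limit `lim_{n̄ → T} Hom(n̄, X)` appearing in the sheaf criterion. -/
def GlobularFamily (X : TreeCatᵒᵖ ⥤ Type) (T : TreeCat) : Type 1 :=
  { u : ∀ (L : TreeCat), L.obj.IsLinear → (L ⟶ T) → X.obj (op L) //
    ∀ (L L' : TreeCat) (hL : L.obj.IsLinear) (hL' : L'.obj.IsLinear)
      (g : L ⟶ L') (f : L' ⟶ T), u L hL (g ≫ f) = X.map g.op (u L' hL' f) }

/-- The canonical map `Hom(T, X) ⟶ lim_{n̄ → T} Hom(n̄, X)`, i.e. from `X(T)` to the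
compatible families indexed by the maps from linear trees into `T`. -/
def globularRestriction (X : TreeCatᵒᵖ ⥤ Type) (T : TreeCat) :
    X.obj (op T) → GlobularFamily X T := fun x =>
  ⟨fun _L _hL f => X.map f.op x, fun L L' _ _ g f => by
    dsimp only
    rw [← FunctorToTypes.map_comp_apply, ← op_comp]⟩

namespace OmegaGraph

variable (T : OmegaGraph)

/-- Iterated source/target pair, from dimension `n` down to dimension `k`. -/
def go : ∀ n, T.cells n × T.cells n → ∀ k, k ≤ n → T.cells k × T.cells k
  | 0, p, _, h => (Nat.le_zero.mp h).symm ▸ p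
  | n+1, p, k, h =>
    if hk : k = n + 1 then hk.symm ▸ p
    else go n (T.src n p.1, T.tgt n p.2) k (by omega)

theorem go_self (n : ℕ) (p : T.cells n × T.cells n) (h : n ≤ n) : T.go n p n h = p := by
  cases n with
  | zero => rfl
  | succ n => rw [go, dif_pos rfl]

theorem go_step (n : ℕ) (p : T.cells (n+1) × T.cells (n+1)) (k : ℕ) (h : k ≤ n)
    (h' : k ≤ n + 1) :
    T.go (n+1) p k h' = T.go n (T.src n p.1, T.tgt n p.2) k h := by
  rw [go, dif_neg (by omega)]

theorem go_succ : ∀ (n : ℕ) (p : T.cells n × T.cells n) (k : ℕ) (h : k + 1 ≤ n),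
    (T.go n p k (Nat.le_of_succ_le h)).1 = T.src k (T.go n p (k+1) h).1 ∧
    (T.go n p k (Nat.le_of_succ_le h)).2 = T.tgt k (T.go n p (k+1) h).2 := by
  intro n
  induction n with
  | zero => intro p k h; omega
  | succ n ih =>
    intro p k h
    by_cases hk : k = n
    · subst hk
      rw [T.go_step k p k le_rfl, go_self, go_self]
      exact ⟨rfl, rfl⟩
    · rw [T.go_step n p k (by omega), T.go_step n p (k+1) (by omega)]
      exact ih _ k (by omega)

/-- Parallel pairs of cells (trivially true in dimension 0). -/
def Par : ∀ m, T.cells m → T.cells m → Prop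
  | 0, _, _ => True
  | m+1, a, b => T.src m a = T.src m b ∧ T.tgt m a = T.tgt m b

theorem par_refl : ∀ m (a : T.cells m), T.Par m a a := by
  intro m a; cases m with
  | zero => trivial
  | succ m => exact ⟨rfl, rfl⟩

theorem par_step : ∀ m (a b : T.cells (m+1)), T.Par (m+1) a b →
    T.Par m (T.src m a) (T.tgt m b) := by
  intro m a b h
  cases m with
  | zero => trivial
  | succ m =>
    obtain ⟨h1, h2⟩ := h
    constructor
    · rw [T.src_src m a, h2]
    · rw [T.tgt_tgt m a, h2]

theorem go_par : ∀ n (p : T.cells n × T.cells n), T.Par n p.1 p.2 →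
    ∀ k (h : k ≤ n), T.Par k (T.go n p k h).1 (T.go n p k h).2 := by
  intro n
  induction n with
  | zero =>
    intro p hp k h
    obtain rfl : k = 0 := Nat.le_zero.mp h
    exact trivial
  | succ n ih =>
    intro p hp k h
    by_cases hk : k = n + 1
    · subst hk; rwa [go_self]
    · rw [T.go_step n p k (by omega)]
      exact ih _ (T.par_step n p.1 p.2 hp) k (by omega)

end OmegaGraph
namespace OmegaGraph

/-- The underlying map of the classifying morphism of a cell. -/
def classApp (T : OmegaGraph) {N : ℕ} (x : T.cells N) : ∀ k, GlobeCell N k → T.cells k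
  | k, .s _ h => (T.go N (x, x) k h.le).1
  | k, .t _ h => (T.go N (x, x) k h.le).2
  | _, .top _ h => h.symm ▸ x

/-- The morphism `globe N ⟶ T` classifying a cell `x` of dimension `N`. -/
def classify (T : OmegaGraph) {N : ℕ} (x : T.cells N) : OmegaGraph.Hom (globe N) T where
  app := T.classApp x
  app_src := by
    intro k c
    cases c with
    | s h =>
      show (T.go N (x,x) k _).1 = T.src k (T.go N (x,x) (k+1) _).1
      exact (T.go_succ N (x,x) k h.le).1
    | t h =>
      show (T.go N (x,x) k _).1 = T.src k (T.go N (x,x) (k+1) _).2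
      rw [(T.go_succ N (x,x) k h.le).1]
      exact (T.go_par N (x,x) (T.par_refl N x) (k+1) h.le).1
    | top h =>
      cases h
      show (T.go (k+1) (x,x) k _).1 = T.src k x
      rw [T.go_step k (x,x) k le_rfl, go_self]
  app_tgt := by
    intro k c
    cases c with
    | s h =>
      show (T.go N (x,x) k _).2 = T.tgt k (T.go N (x,x) (k+1) _).1
      rw [(T.go_succ N (x,x) k h.le).2]
      exact ((T.go_par N (x,x) (T.par_refl N x) (k+1) h.le).2).symm
    | t h =>
      show (T.go N (x,x) k _).2 = T.tgt k (T.go N (x,x) (k+1) _).2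
      exact (T.go_succ N (x,x) k h.le).2
    | top h =>
      cases h
      show (T.go (k+1) (x,x) k _).2 = T.tgt k x
      rw [T.go_step k (x,x) k le_rfl, go_self]

theorem classify_top (T : OmegaGraph) {N : ℕ} (x : T.cells N) :
    (T.classify x).app N (.top N rfl) = x := rfl

/-- A morphism out of a globe is determined by the image of the top cell. -/
theorem globe_hom_ext {N : ℕ} {Z : OmegaGraph} (g g' : OmegaGraph.Hom (globe N) Z)
    (h : g.app N (.top N rfl) = g'.app N (.top N rfl)) : g = g' := by
  have key : ∀ d k, k + d = N → ∀ c : GlobeCell N k, g.app k c = g'.app k c := by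
    intro d
    induction d with
    | zero =>
      intro k hk c
      obtain rfl : k = N := by omega
      cases c with
      | s h' => omega
      | t h' => omega
      | top h' => exact h
    | succ d ih =>
      intro k hk c
      cases c with
      | top h' => omega
      | s h' =>
        by_cases hN : k + 1 = N
        · have e1 : g.app k (GlobeCell.s k h') = Z.src k (g.app (k+1) (.top (k+1) hN)) :=
            g.app_src k (.top (k+1) hN)
          have e2 : g'.app k (GlobeCell.s k h') = Z.src k (g'.app (k+1) (.top (k+1) hN)) :=
            g'.app_src k (.top (k+1) hN)
          rw [e1, e2, ih (k+1) (by omega) (.top (k+1) hN)]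
        · have hlt : k + 1 < N := by omega
          have e1 : g.app k (GlobeCell.s k h') = Z.src k (g.app (k+1) (.s (k+1) hlt)) :=
            g.app_src k (.s (k+1) hlt)
          have e2 : g'.app k (GlobeCell.s k h') = Z.src k (g'.app (k+1) (.s (k+1) hlt)) :=
            g'.app_src k (.s (k+1) hlt)
          rw [e1, e2, ih (k+1) (by omega) (.s (k+1) hlt)]
      | t h' =>
        by_cases hN : k + 1 = N
        · have e1 : g.app k (GlobeCell.t k h') = Z.tgt k (g.app (k+1) (.top (k+1) hN)) :=
            g.app_tgt k (.top (k+1) hN)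
          have e2 : g'.app k (GlobeCell.t k h') = Z.tgt k (g'.app (k+1) (.top (k+1) hN)) :=
            g'.app_tgt k (.top (k+1) hN)
          rw [e1, e2, ih (k+1) (by omega) (.top (k+1) hN)]
        · have hlt : k + 1 < N := by omega
          have e1 : g.app k (GlobeCell.t k h') = Z.tgt k (g.app (k+1) (.t (k+1) hlt)) :=
            g.app_tgt k (.t (k+1) hlt)
          have e2 : g'.app k (GlobeCell.t k h') = Z.tgt k (g'.app (k+1) (.t (k+1) hlt)) :=
            g'.app_tgt k (.t (k+1) hlt)
          rw [e1, e2, ih (k+1) (by omega) (.t (k+1) hlt)]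
  ext k c
  have hkN : k ≤ N := by cases c with
    | s h' => omega
    | t h' => omega
    | top h' => omega
  exact key (N - k) k (by omega) c

end OmegaGraph
namespace GlobeTree

open OmegaGraph

/-- Encoding of globe cells to prove finiteness. -/
def code {N : ℕ} : (Σ k, GlobeCell N k) → Fin (N+1) × Fin 3
  | ⟨k, .s _ h⟩ => (⟨k, by omega⟩, 0)
  | ⟨k, .t _ h⟩ => (⟨k, by omega⟩, 1)
  | ⟨k, .top _ h⟩ => (⟨k, by omega⟩, 2)

theorem code_injective {N : ℕ} : Function.Injective (code (N := N)) := by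
  rintro ⟨k, c⟩ ⟨k', c'⟩ h
  cases c <;> cases c' <;>
    simp only [code, Prod.mk.injEq, Fin.mk.injEq] at h <;> first
    | (obtain ⟨rfl, -⟩ := h; rfl)
    | omega

instance globeFinite (N : ℕ) : Finite (Σ k, (globe N).cells k) :=
  Finite.of_injective _ (code_injective (N := N))

/-- The rank of a cell of the globe in the total order. -/
def rank {N : ℕ} : (Σ k, GlobeCell N k) → ℕ
  | ⟨k, .s _ _⟩ => k
  | ⟨k, .t _ _⟩ => 2 * N - k
  | ⟨_, .top _ _⟩ => N

theorem rank_mono {N : ℕ} {a b : Σ k, (globe N).cells k} (h : (globe N).CellStep a b) :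
    rank a ≤ rank b := by
  rcases h with ⟨n, x, rfl, rfl⟩ | ⟨n, x, rfl, rfl⟩
  · cases x with
    | s h => simp only [globe, rank]; omega
    | t h => simp only [globe, rank]; omega
    | top h => simp only [globe, rank]; omega
  · cases x with
    | s h => simp only [globe, rank]; omega
    | t h => simp only [globe, rank]; omega
    | top h => simp only [globe, rank]; omega

theorem rank_le {N : ℕ} {a b : Σ k, (globe N).cells k} (h : (globe N).cellLE a b) :
    rank a ≤ rank b := by
  induction h with
  | refl => exact le_rfl
  | tail _ h2 ih => exact ih.trans (rank_mono h2)

theorem rank_injective {N : ℕ} : Function.Injective (rank (N := N)) := by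
  rintro ⟨k, c⟩ ⟨k', c'⟩ h
  cases c <;> cases c' <;> simp only [rank] at h <;>
    [skip; omega; omega; omega; skip; omega; omega; omega; skip] <;>
    · obtain rfl : k = k' := by omega
      rfl

theorem step_s {N k : ℕ} (h : k + 1 < N) :
    (globe N).CellStep ⟨k, .s k (by omega)⟩ ⟨k+1, .s (k+1) h⟩ :=
  Or.inl ⟨k, .s (k+1) h, rfl, rfl⟩

theorem step_t {N k : ℕ} (h : k + 1 < N) :
    (globe N).CellStep ⟨k+1, .t (k+1) h⟩ ⟨k, .t k (by omega)⟩ :=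
  Or.inr ⟨k, .t (k+1) h, rfl, rfl⟩

theorem sTop {N : ℕ} : ∀ d k (h : k + d + 1 = N),
    (globe N).cellLE ⟨k, .s k (by omega)⟩ ⟨N, .top N rfl⟩ := by
  intro d
  induction d with
  | zero =>
    intro k h
    subst h
    exact Relation.ReflTransGen.single (Or.inl ⟨k, .top (k+1) rfl, rfl, rfl⟩)
  | succ d ih =>
    intro k h
    exact Relation.ReflTransGen.head (step_s (by omega)) (ih (k+1) (by omega))

theorem tTop {N : ℕ} : ∀ d k (h : k + d + 1 = N),
    (globe N).cellLE ⟨N, .top N rfl⟩ ⟨k, .t k (by omega)⟩ := by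
  intro d
  induction d with
  | zero =>
    intro k h
    subst h
    exact Relation.ReflTransGen.single (Or.inr ⟨k, .top (k+1) rfl, rfl, rfl⟩)
  | succ d ih =>
    intro k h
    exact Relation.ReflTransGen.tail (ih (k+1) (by omega)) (step_t (by omega))

theorem sMono {N : ℕ} : ∀ d k (h : k + d < N),
    (globe N).cellLE ⟨k, .s k (by omega)⟩ ⟨k + d, .s (k+d) h⟩ := by
  intro d
  induction d with
  | zero => intro k h; exact Relation.ReflTransGen.refl
  | succ d ih =>
    intro k h
    exact Relation.ReflTransGen.tail (ih k (by omega)) (step_s h)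

theorem tMono {N : ℕ} : ∀ d k (h : k + d < N),
    (globe N).cellLE ⟨k + d, .t (k+d) h⟩ ⟨k, .t k (by omega)⟩ := by
  intro d
  induction d with
  | zero => intro k h; exact Relation.ReflTransGen.refl
  | succ d ih =>
    intro k h
    exact Relation.ReflTransGen.head (step_t h) (ih k (by omega))

theorem s_le_top {N k : ℕ} (h : k < N) :
    (globe N).cellLE ⟨k, .s k h⟩ ⟨N, .top N rfl⟩ := sTop (N - k - 1) k (by omega)

theorem top_le_t {N k : ℕ} (h : k < N) :
    (globe N).cellLE ⟨N, .top N rfl⟩ ⟨k, .t k h⟩ := tTop (N - k - 1) k (by omega)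

theorem globe_total {N : ℕ} (a b : Σ k, (globe N).cells k) :
    (globe N).cellLE a b ∨ (globe N).cellLE b a := by
  obtain ⟨k, c⟩ := a
  obtain ⟨k', c'⟩ := b
  cases c with
  | s h =>
    cases c' with
    | s h' =>
      rcases le_total k k' with hk | hk
      · obtain ⟨d, rfl⟩ := Nat.exists_eq_add_of_le hk
        exact Or.inl (sMono d k h')
      · obtain ⟨d, rfl⟩ := Nat.exists_eq_add_of_le hk
        exact Or.inr (sMono d k' h)
    | t h' => exact Or.inl ((s_le_top h).trans (top_le_t h'))
    | top h' => cases h'; exact Or.inl (s_le_top h)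
  | t h =>
    cases c' with
    | s h' => exact Or.inr ((s_le_top h').trans (top_le_t h))
    | t h' =>
      rcases le_total k k' with hk | hk
      · obtain ⟨d, rfl⟩ := Nat.exists_eq_add_of_le hk
        exact Or.inr (tMono d k h')
      · obtain ⟨d, rfl⟩ := Nat.exists_eq_add_of_le hk
        exact Or.inl (tMono d k' h)
    | top h' => cases h'; exact Or.inr (top_le_t h)
  | top h =>
    cases h
    cases c' with
    | s h' => exact Or.inr (s_le_top h')
    | t h' => exact Or.inl (top_le_t h')
    | top h' => cases h'; exact Or.inl Relation.ReflTransGen.refl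

theorem globe_isTree (N : ℕ) : (globe N).IsTree := by
  refine ⟨⟨⟨N, .top N rfl⟩⟩, globeFinite N, globe_total, ?_⟩
  intro a b h1 h2
  exact rank_injective (le_antisymm (rank_le h1) (rank_le h2))

theorem globe_isLinear (N : ℕ) : (globe N).IsLinear := ⟨N, ⟨Iso.refl _⟩⟩

end GlobeTree
/-- The globe as an object of `TreeCat`. -/
def globeT (N : ℕ) : TreeCat := ⟨globe N, GlobeTree.globe_isTree N⟩

/-- The presieve on `T` of all maps from linear trees. -/
def linPre (T : TreeCat) : Presieve T := fun W _ => W.obj.IsLinear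

theorem gen_cover (T : TreeCat) : CoveringSieve T (Sieve.generate (linPre T)) := by
  intro n x
  refine ⟨globeT n, ObjectProperty.homMk (T.obj.classify x),
    ⟨globeT n, 𝟙 _, ObjectProperty.homMk (T.obj.classify x), GlobeTree.globe_isLinear n, Category.id_comp _⟩,
    ⟨.top n rfl, T.obj.classify_top x⟩⟩

theorem linear_mem {T : TreeCat} {S : Sieve T} (hS : CoveringSieve T S)
    (L : TreeCat) (hL : L.obj.IsLinear) (f : L ⟶ T) : S.arrows f := by
  obtain ⟨M, ⟨e⟩⟩ := hL
  obtain ⟨W, h, hhS, y, hy⟩ := hS M (f.hom.app M (e.inv.app M (.top M rfl)))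
  have heq : (W.obj.classify y ≫ h.hom : globe M ⟶ T.obj) = (e.inv ≫ f.hom : globe M ⟶ T.obj) := by
    apply OmegaGraph.globe_hom_ext
    show h.hom.app M ((W.obj.classify y).app M (.top M rfl))
      = f.hom.app M (e.inv.app M (.top M rfl))
    rw [W.obj.classify_top y, hy]
  let g : L ⟶ W := ObjectProperty.homMk (e.hom ≫ (show globe M ⟶ W.obj from W.obj.classify y) : L.obj ⟶ W.obj)
  have hf : f = g ≫ h := by
    apply ObjectProperty.hom_ext
    show f.hom = (e.hom ≫ W.obj.classify y) ≫ h.hom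
    calc f.hom = e.hom ≫ (e.inv ≫ f.hom) := by rw [Iso.hom_inv_id_assoc]
    _ = e.hom ≫ (W.obj.classify y ≫ h.hom) := by rw [heq]
    _ = (e.hom ≫ W.obj.classify y) ≫ h.hom := by rw [Category.assoc]
  rw [hf]
  exact S.downward_closed hhS _

theorem restrict_compatible (X : TreeCatᵒᵖ ⥤ Type) {T : TreeCat} (R : Presieve T)
    (a : X.obj (op T)) :
    Presieve.FamilyOfElements.Compatible
      (fun _W f _ => X.map f.op a : Presieve.FamilyOfElements X R) := by
  intro W₁ W₂ Z g₁ g₂ f₁ f₂ h₁ h₂ comm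
  dsimp only
  rw [← FunctorToTypes.map_comp_apply, ← FunctorToTypes.map_comp_apply, ← op_comp, ← op_comp,
    comm]
/-- A presheaf `X` on the category `Θ₀` of trees is a sheaf for the Grothendieck topology
generated by the epimorphic families if and only if, for every tree `T`, the canonical map
`Hom(T, X) ⟶ lim_{n̄ → T} Hom(n̄, X)` (the limit being taken over all maps from linear
trees `n̄` into `T`) is a bijection. -/
theorem sheaf_iff_globular_limit
    (J : GrothendieckTopology TreeCat)
    (hJ : ∀ (T : TreeCat) (S : Sieve T), S ∈ J T ↔ CoveringSieve T S)
    (X : TreeCatᵒᵖ ⥤ Type) :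
    Presieve.IsSheaf J X ↔ ∀ T : TreeCat, Function.Bijective (globularRestriction X T) := by
  constructor
  · intro hX T
    have hgen : Sieve.generate (linPre T) ∈ J T := (hJ T _).2 (gen_cover T)
    have hR : Presieve.IsSheafFor X (linPre T) :=
      (Presieve.isSheafFor_iff_generate _).2 (hX _ hgen)
    constructor
    · -- injectivity
      intro a b hab
      obtain ⟨t, -, huniq⟩ := hR _ (restrict_compatible X (linPre T) a)
      have ha : Presieve.FamilyOfElements.IsAmalgamation
          (fun W f _ => X.map f.op a : Presieve.FamilyOfElements X (linPre T)) a :=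
        fun _ _ _ => rfl
      have hb : Presieve.FamilyOfElements.IsAmalgamation
          (fun W f _ => X.map f.op a : Presieve.FamilyOfElements X (linPre T)) b := by
        intro W f hf
        exact (congrFun (congrFun (congrFun (congrArg Subtype.val hab) W) hf) f).symm
      exact (huniq a ha).trans (huniq b hb).symm
    · -- surjectivity
      intro u
      let fam : Presieve.FamilyOfElements X (linPre T) := fun W f hf => u.1 W hf f
      have hfam : fam.Compatible := by
        intro W₁ W₂ Z g₁ g₂ f₁ f₂ h₁ h₂ comm
        have hgenZ : Sieve.generate (linPre Z) ∈ J Z := (hJ Z _).2 (gen_cover Z)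
        have hRZ := hX _ hgenZ
        obtain ⟨t, -, huniq⟩ :=
          hRZ _ (restrict_compatible X _ (X.map g₁.op (fam f₁ h₁)))
        have hA : Presieve.FamilyOfElements.IsAmalgamation
            (fun V k _ => X.map k.op (X.map g₁.op (fam f₁ h₁)) :
              Presieve.FamilyOfElements X ((Sieve.generate (linPre Z)) : Presieve Z))
            (X.map g₁.op (fam f₁ h₁)) := fun _ _ _ => rfl
        have hBam : Presieve.FamilyOfElements.IsAmalgamation
            (fun V k _ => X.map k.op (X.map g₁.op (fam f₁ h₁)) :
              Presieve.FamilyOfElements X ((Sieve.generate (linPre Z)) : Presieve Z))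
            (X.map g₂.op (fam f₂ h₂)) := by
          intro V k hk
          obtain ⟨Lz, l, ez, hlin, rfl⟩ := hk
          dsimp only
          rw [op_comp, FunctorToTypes.map_comp_apply, FunctorToTypes.map_comp_apply]
          apply congrArg (X.map l.op)
          show X.map ez.op (X.map g₂.op (u.1 W₂ h₂ f₂))
            = X.map ez.op (X.map g₁.op (u.1 W₁ h₁ f₁))
          rw [← FunctorToTypes.map_comp_apply, ← FunctorToTypes.map_comp_apply,
            ← op_comp, ← op_comp, ← u.2 Lz W₂ hlin h₂ (ez ≫ g₂) f₂,
            ← u.2 Lz W₁ hlin h₁ (ez ≫ g₁) f₁]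
          exact congrArg (u.1 Lz hlin) (by rw [Category.assoc, Category.assoc, comm])
        exact (huniq _ hA).trans (huniq _ hBam).symm
      obtain ⟨t, ht, -⟩ := hR fam hfam
      refine ⟨t, Subtype.ext ?_⟩
      funext L hL f
      exact ht f hL
  · intro hB T S hS
    rw [hJ] at hS
    intro fam hfam
    have hsc := hfam.to_sieveCompatible
    let u : GlobularFamily X T :=
      ⟨fun L hL f => fam f (linear_mem hS L hL f), by
        intro L L' hL hL' g f
        exact hsc f g (linear_mem hS L' hL' f)⟩
    obtain ⟨t, ht⟩ := (hB T).2 u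
    refine ⟨t, ?_, ?_⟩
    · intro W f hf
      apply (hB W).1
      apply Subtype.ext
      funext L hL e
      show X.map e.op (X.map f.op t) = X.map e.op (fam f hf)
      rw [← FunctorToTypes.map_comp_apply, ← op_comp]
      have h1 : X.map (e ≫ f).op t = u.1 L hL (e ≫ f) :=
        congrFun (congrFun (congrFun (congrArg Subtype.val ht) L) hL) (e ≫ f)
      rw [h1, ← hsc f e hf]
    · intro t' ht'
      apply (hB T).1
      rw [ht]
      apply Subtype.ext
      funext L hL e
      show X.map e.op t' = u.1 L hL e
      exact ht' e (linear_mem hS L hL e)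
end

section
/- The category of ω-graphs is canonically equivalent to the category of sheaves of sets on the category Θ₀ of trees, equipped with the Grothendieck topology whose covering families are the epimorphic families; the equivalence sends an ω-graph X to the presheaf T ↦ Hom_{ωGraph}(T, X). -/
open CategoryTheory CategoryTheory.Limits

open Opposite

/-- The functor sending an `ω`-graph `X` to the presheaf `T ↦ Hom_{ωGraph}(T, X)` on the
category `Θ₀` of trees. -/
def treeHomFunctor : OmegaGraph ⥤ (TreeCatᵒᵖ ⥤ Type) where
  obj X :=
    { obj := fun T => (T.unop.obj ⟶ X)
      map := fun g => TypeCat.ofHom (fun u => g.unop.hom ≫ u)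
      map_id := fun _ => rfl
      map_comp := fun _ _ => rfl }
  map f :=
    { app := fun T => TypeCat.ofHom (fun u => u ≫ f)
      naturality := fun T T' g => rfl }
  map_id X := by apply NatTrans.ext; funext T; ext u; exact Category.comp_id u
  map_comp f g := rfl

namespace OmegaGraph

/-- Iterated source: descend from `cells N` to `cells k`. -/
def sIter (X : OmegaGraph) (k : ℕ) : ∀ N, k ≤ N → X.cells N → X.cells k
  | 0, h, x => by obtain rfl : k = 0 := Nat.le_zero.mp h; exact x
  | N+1, h, x =>
    if hk : k = N + 1 then by subst hk; exact x
    else X.sIter k N (by omega) (X.src N x)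

/-- Iterated target: descend from `cells N` to `cells k`. -/
def tIter (X : OmegaGraph) (k : ℕ) : ∀ N, k ≤ N → X.cells N → X.cells k
  | 0, h, x => by obtain rfl : k = 0 := Nat.le_zero.mp h; exact x
  | N+1, h, x =>
    if hk : k = N + 1 then by subst hk; exact x
    else X.tIter k N (by omega) (X.tgt N x)

variable (X : OmegaGraph)

@[simp] lemma sIter_self (k : ℕ) (h : k ≤ k) (x : X.cells k) : X.sIter k k h x = x := by
  cases k with
  | zero => rfl
  | succ n => simp [sIter]

@[simp] lemma tIter_self (k : ℕ) (h : k ≤ k) (x : X.cells k) : X.tIter k k h x = x := by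
  cases k with
  | zero => rfl
  | succ n => simp [tIter]

lemma sIter_succ (k N : ℕ) (h : k ≤ N) (x : X.cells (N + 1)) :
    X.sIter k (N + 1) (by omega) x = X.sIter k N h (X.src N x) := by
  rw [sIter, dif_neg (by omega)]

lemma tIter_succ (k N : ℕ) (h : k ≤ N) (x : X.cells (N + 1)) :
    X.tIter k (N + 1) (by omega) x = X.tIter k N h (X.tgt N x) := by
  rw [tIter, dif_neg (by omega)]

lemma sIter_src_eq_tgt (k N : ℕ) (h : k ≤ N) (x : X.cells (N + 1 + 1)) :
    X.sIter k (N + 1) (by omega) (X.src (N + 1) x)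
      = X.sIter k (N + 1) (by omega) (X.tgt (N + 1) x) := by
  rw [X.sIter_succ k N h, X.sIter_succ k N h, X.src_src]

lemma tIter_src_eq_tgt (k N : ℕ) (h : k ≤ N) (x : X.cells (N + 1 + 1)) :
    X.tIter k (N + 1) (by omega) (X.src (N + 1) x)
      = X.tIter k (N + 1) (by omega) (X.tgt (N + 1) x) := by
  rw [X.tIter_succ k N h, X.tIter_succ k N h, X.tgt_tgt]

lemma src_sIter (k : ℕ) : ∀ N (h : k + 1 ≤ N) (x : X.cells N),
    X.src k (X.sIter (k+1) N h x) = X.sIter k N (by omega) x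
  | N+1, h, x => by
    rcases Nat.lt_or_ge (k+1) (N+1) with h' | h'
    · have hk : k + 1 ≤ N := by omega
      rw [X.sIter_succ (k+1) N hk, X.sIter_succ k N (by omega), src_sIter k N hk]
    · have : k + 1 = N + 1 := by omega
      obtain rfl : k = N := by omega
      rw [X.sIter_self, X.sIter_succ k k (le_refl k), X.sIter_self]

lemma src_tIter (k : ℕ) : ∀ N (h : k + 1 ≤ N) (x : X.cells N),
    X.src k (X.tIter (k+1) N h x) = X.sIter k N (by omega) x
  | N+1, h, x => by
    rcases Nat.lt_or_ge (k+1) (N+1) with h' | h'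
    · have hk : k + 1 ≤ N := by omega
      rw [X.tIter_succ (k+1) N hk, src_tIter k N hk]
      rcases Nat.lt_or_ge k N with h'' | h''
      · obtain ⟨M, rfl⟩ : ∃ M, N = M + 1 := ⟨N - 1, by omega⟩
        rw [← X.sIter_src_eq_tgt k M (by omega), X.sIter_succ k (M+1) (by omega)]
      · omega
    · obtain rfl : k = N := by omega
      rw [X.tIter_self, X.sIter_succ k k (le_refl k), X.sIter_self]

lemma tgt_tIter (k : ℕ) : ∀ N (h : k + 1 ≤ N) (x : X.cells N),
    X.tgt k (X.tIter (k+1) N h x) = X.tIter k N (by omega) x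
  | N+1, h, x => by
    rcases Nat.lt_or_ge (k+1) (N+1) with h' | h'
    · have hk : k + 1 ≤ N := by omega
      rw [X.tIter_succ (k+1) N hk, X.tIter_succ k N (by omega), tgt_tIter k N hk]
    · obtain rfl : k = N := by omega
      rw [X.tIter_self, X.tIter_succ k k (le_refl k), X.tIter_self]

lemma tgt_sIter (k : ℕ) : ∀ N (h : k + 1 ≤ N) (x : X.cells N),
    X.tgt k (X.sIter (k+1) N h x) = X.tIter k N (by omega) x
  | N+1, h, x => by
    rcases Nat.lt_or_ge (k+1) (N+1) with h' | h'
    · have hk : k + 1 ≤ N := by omega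
      rw [X.sIter_succ (k+1) N hk, tgt_sIter k N hk]
      rcases Nat.lt_or_ge k N with h'' | h''
      · obtain ⟨M, rfl⟩ : ∃ M, N = M + 1 := ⟨N - 1, by omega⟩
        rw [X.tIter_src_eq_tgt k M (by omega), X.tIter_succ k (M+1) (by omega)]
      · omega
    · obtain rfl : k = N := by omega
      rw [X.sIter_self, X.tIter_succ k k (le_refl k), X.tIter_self]

lemma sIter_succ_self (k : ℕ) (h : k ≤ k + 1) (x : X.cells (k + 1)) :
    X.sIter k (k + 1) h x = X.src k x := by
  rw [X.sIter_succ k k (le_refl k), X.sIter_self]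

lemma tIter_succ_self (k : ℕ) (h : k ≤ k + 1) (x : X.cells (k + 1)) :
    X.tIter k (k + 1) h x = X.tgt k x := by
  rw [X.tIter_succ k k (le_refl k), X.tIter_self]

end OmegaGraph
namespace OmegaGraph

/-- The top cell of the `N`-globe. -/
abbrev globeTop (N : ℕ) : (globe N).cells N := GlobeCell.top N rfl

/-- The classifying morphism `globe N ⟶ X` of an `N`-cell `x` of `X`. -/
def cls {X : OmegaGraph} {N : ℕ} (x : X.cells N) : globe N ⟶ X where
  app k c :=
    match c with
    | .s _ h => X.sIter k N h.le x
    | .t _ h => X.tIter k N h.le x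
    | .top _ h => by subst h; exact x
  app_src k c := by
    match c with
    | .s _ h =>
      show X.sIter k N _ x = X.src k (X.sIter (k+1) N _ x)
      rw [X.src_sIter k N h.le]
    | .t _ h =>
      show X.sIter k N _ x = X.src k (X.tIter (k+1) N _ x)
      rw [X.src_tIter k N h.le]
    | .top _ h =>
      subst h
      show X.sIter k (k+1) _ x = X.src k x
      rw [X.sIter_succ_self]
  app_tgt k c := by
    match c with
    | .s _ h =>
      show X.tIter k N _ x = X.tgt k (X.sIter (k+1) N _ x)
      rw [X.tgt_sIter k N h.le]
    | .t _ h =>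
      show X.tIter k N _ x = X.tgt k (X.tIter (k+1) N _ x)
      rw [X.tgt_tIter k N h.le]
    | .top _ h =>
      subst h
      show X.tIter k (k+1) _ x = X.tgt k x
      rw [X.tIter_succ_self]

@[simp] lemma cls_app_top {X : OmegaGraph} {N : ℕ} (x : X.cells N) :
    (cls x).app N (globeTop N) = x := rfl

lemma cls_app_s {X : OmegaGraph} {N : ℕ} (x : X.cells N) (k : ℕ) (h : k < N) :
    (cls x).app k (.s k h) = X.sIter k N h.le x := rfl

lemma cls_app_t {X : OmegaGraph} {N : ℕ} (x : X.cells N) (k : ℕ) (h : k < N) :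
    (cls x).app k (.t k h) = X.tIter k N h.le x := rfl

lemma hom_app_top {X : OmegaGraph} {N : ℕ} (f : globe N ⟶ X) (k : ℕ) (h : k = N) :
    f.app k (.top k h) = h ▸ (f.app N (globeTop N)) := by
  subst h; rfl

/-- Every morphism out of a globe is determined by the image of the top cell. -/
lemma globe_hom_app_st {X : OmegaGraph} {N : ℕ} (f : globe N ⟶ X) :
    ∀ k (h : k < N),
      f.app k (.s k h) = X.sIter k N h.le (f.app N (globeTop N)) ∧
      f.app k (.t k h) = X.tIter k N h.le (f.app N (globeTop N)) := by
  intro k h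
  by_cases hk : k + 1 = N
  · subst hk
    have hs := f.app_src k (globeTop (k+1))
    have ht := f.app_tgt k (globeTop (k+1))
    constructor
    · show f.app k (.s k h) = X.sIter k (k+1) _ _
      rw [X.sIter_succ_self]
      exact hs
    · show f.app k (.t k h) = X.tIter k (k+1) _ _
      rw [X.tIter_succ_self]
      exact ht
  · have h' : k + 1 < N := by omega
    obtain ⟨IHs, IHt⟩ := globe_hom_app_st f (k+1) h'
    have hs := f.app_src k (GlobeCell.s (k+1) h')
    have ht := f.app_tgt k (GlobeCell.t (k+1) h')
    constructor
    · show f.app k (.s k h) = _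
      have : f.app k (.s k h) = X.src k (f.app (k+1) (.s (k+1) h')) := hs
      rw [this, IHs, X.src_sIter k N h'.le]
    · have : f.app k (.t k h) = X.tgt k (f.app (k+1) (.t (k+1) h')) := ht
      rw [this, IHt, X.tgt_tIter k N h'.le]
termination_by k h => N - k

lemma hom_eq_cls {X : OmegaGraph} {N : ℕ} (f : globe N ⟶ X) :
    f = cls (f.app N (globeTop N)) := by
  apply OmegaGraph.Hom.ext
  funext k c
  cases c with
  | s h => exact (globe_hom_app_st f _ h).1
  | t h => exact (globe_hom_app_st f _ h).2
  | top h => exact (hom_app_top f _ h).trans (hom_app_top (cls (f.app N (globeTop N))) _ h).symm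

lemma globe_hom_ext_s8 {X : OmegaGraph} {N : ℕ} (f g : globe N ⟶ X)
    (h : f.app N (globeTop N) = g.app N (globeTop N)) : f = g := by
  rw [hom_eq_cls f, hom_eq_cls g, h]

@[simp] lemma comp_app {X Y Z : OmegaGraph} (f : X ⟶ Y) (g : Y ⟶ Z) (n : ℕ) (x : X.cells n) :
    (f ≫ g).app n x = g.app n (f.app n x) := rfl

@[simp] lemma id_app (X : OmegaGraph) (n : ℕ) (x : X.cells n) :
    (𝟙 X : X ⟶ X).app n x = x := rfl

/-- Naturality of classifiers. -/
lemma cls_naturality {X Y : OmegaGraph} (u : X ⟶ Y) {N : ℕ} (x : X.cells N) :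
    cls (u.app N x) = cls x ≫ u := by
  apply globe_hom_ext_s8
  rfl

/-- The source cofaces between globes. -/
def globeSrc (n : ℕ) : globe n ⟶ globe (n+1) :=
  cls (GlobeCell.s n (Nat.lt_succ_self n))

/-- The target cofaces between globes. -/
def globeTgt (n : ℕ) : globe n ⟶ globe (n+1) :=
  cls (GlobeCell.t n (Nat.lt_succ_self n))

lemma cls_src {X : OmegaGraph} {n : ℕ} (x : X.cells (n+1)) :
    cls (X.src n x) = globeSrc n ≫ cls x := by
  apply globe_hom_ext_s8
  show X.src n x = (cls x).app n ((globeSrc n).app n (globeTop n))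
  show X.src n x = (cls x).app n (.s n (Nat.lt_succ_self n))
  rw [cls_app_s, X.sIter_succ_self]

lemma cls_tgt {X : OmegaGraph} {n : ℕ} (x : X.cells (n+1)) :
    cls (X.tgt n x) = globeTgt n ≫ cls x := by
  apply globe_hom_ext_s8
  show X.tgt n x = (cls x).app n ((globeTgt n).app n (globeTop n))
  show X.tgt n x = (cls x).app n (.t n (Nat.lt_succ_self n))
  rw [cls_app_t, X.tIter_succ_self]

end OmegaGraph
lemma globeCell_dim_le {N k : ℕ} (c : GlobeCell N k) : k ≤ N := by
  cases c with
  | s h => exact h.le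
  | t h => exact h.le
  | top h => exact h.le

/-- A tag distinguishing the three kinds of globe cells. -/
def cellTag {N k : ℕ} : GlobeCell N k → Fin 3
  | .s _ _ => 0
  | .t _ _ => 1
  | .top _ _ => 2

namespace OmegaGraph

variable (N : ℕ)

instance : Finite (Σ k, (globe N).cells k) := by
  apply Finite.of_injective
    (fun c : Σ k, (globe N).cells k =>
      ((⟨c.1, Nat.lt_succ_of_le (globeCell_dim_le c.2)⟩ : Fin (N+1)), cellTag c.2))
  rintro ⟨k, c⟩ ⟨k', c'⟩ h
  simp only [Prod.mk.injEq, Fin.mk.injEq] at h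
  obtain rfl : k = k' := h.1
  have h2 := h.2
  congr 1
  cases c <;> cases c' <;> simp [cellTag] at h2 <;> rfl

/-- The rank of a globe cell in the linear order. -/
def globeRank : (Σ k, (globe N).cells k) → ℕ :=
  fun c => match c.2 with
    | .s _ _ => c.1
    | .top _ _ => N
    | .t _ _ => 2 * N - c.1

lemma globeRank_s (k : ℕ) (h : k < N) : globeRank N ⟨k, .s k h⟩ = k := rfl
lemma globeRank_t (k : ℕ) (h : k < N) : globeRank N ⟨k, .t k h⟩ = 2 * N - k := rfl
lemma globeRank_top (k : ℕ) (h : k = N) : globeRank N ⟨k, .top k h⟩ = N := rfl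

lemma globe_top_sigma {j : ℕ} (hj : j = N) :
    (⟨j, GlobeCell.top j hj⟩ : Σ k, (globe N).cells k) = ⟨N, globeTop N⟩ := by
  subst hj; rfl

lemma globe_step_rank {a b : Σ k, (globe N).cells k}
    (h : (globe N).CellStep a b) : globeRank N a < globeRank N b := by
  rcases h with ⟨n, x, rfl, rfl⟩ | ⟨n, x, rfl, rfl⟩
  · cases x with
    | s h' =>
      show globeRank N ⟨n, .s n _⟩ < globeRank N ⟨n+1, .s (n+1) h'⟩
      rw [globeRank_s, globeRank_s]; omega
    | t h' =>
      show globeRank N ⟨n, .s n _⟩ < globeRank N ⟨n+1, .t (n+1) h'⟩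
      rw [globeRank_s, globeRank_t]; omega
    | top h' =>
      show globeRank N ⟨n, .s n _⟩ < globeRank N ⟨n+1, .top (n+1) h'⟩
      rw [globeRank_s, globeRank_top _ _ h']; omega
  · cases x with
    | s h' =>
      show globeRank N ⟨n+1, .s (n+1) h'⟩ < globeRank N ⟨n, .t n _⟩
      rw [globeRank_s, globeRank_t]; omega
    | t h' =>
      show globeRank N ⟨n+1, .t (n+1) h'⟩ < globeRank N ⟨n, .t n _⟩
      rw [globeRank_t, globeRank_t]; omega
    | top h' =>
      show globeRank N ⟨n+1, .top (n+1) h'⟩ < globeRank N ⟨n, .t n _⟩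
      rw [globeRank_top _ _ h', globeRank_t]; omega

lemma globe_cellLE_rank {a b : Σ k, (globe N).cells k}
    (h : (globe N).cellLE a b) : globeRank N a ≤ globeRank N b := by
  induction h with
  | refl => exact le_refl _
  | tail _ hs ih => exact ih.trans (globe_step_rank N hs).le

lemma globe_antisymm {a b : Σ k, (globe N).cells k}
    (hab : (globe N).cellLE a b) (hba : (globe N).cellLE b a) : a = b := by
  rcases (Relation.reflTransGen_iff_eq_or_transGen.mp hab) with rfl | h
  · rfl
  · exfalso
    have h1 : globeRank N a < globeRank N b := by
      clear hab hba
      induction h with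
      | single hs => exact globe_step_rank N hs
      | tail _ hs ih => exact ih.trans (globe_step_rank N hs)
    exact absurd (globe_cellLE_rank N hba) (by omega)

/-- Upward chain: `s k ≤ top`. -/
lemma globe_le_s_top : ∀ k (h : k < N),
    (globe N).cellLE ⟨k, .s k h⟩ ⟨N, globeTop N⟩ := by
  intro k h
  by_cases hk : k + 1 = N
  · subst hk
    exact Relation.ReflTransGen.single
      (Or.inl ⟨k, GlobeCell.top (k+1) rfl, rfl, rfl⟩)
  · have h' : k + 1 < N := by omega
    exact Relation.ReflTransGen.head
      (Or.inl ⟨k, GlobeCell.s (k+1) h', rfl, rfl⟩) (globe_le_s_top (k+1) h')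
termination_by k h => N - k

/-- Downward chain: `top ≤ t k`. -/
lemma globe_le_top_t : ∀ k (h : k < N),
    (globe N).cellLE ⟨N, globeTop N⟩ ⟨k, .t k h⟩ := by
  intro k h
  by_cases hk : k + 1 = N
  · subst hk
    exact Relation.ReflTransGen.single
      (Or.inr ⟨k, GlobeCell.top (k+1) rfl, rfl, rfl⟩)
  · have h' : k + 1 < N := by omega
    exact Relation.ReflTransGen.tail (globe_le_top_t (k+1) h')
      (Or.inr ⟨k, GlobeCell.t (k+1) h', rfl, rfl⟩)
termination_by k h => N - k

lemma globe_le_s_s : ∀ k j (hkj : k ≤ j) (hj : j < N),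
    (globe N).cellLE ⟨k, .s k (lt_of_le_of_lt hkj hj)⟩ ⟨j, .s j hj⟩ := by
  intro k j hkj hj
  rcases Nat.eq_or_lt_of_le hkj with rfl | hlt
  · exact Relation.ReflTransGen.refl
  · have h1 : k + 1 ≤ j := hlt
    exact Relation.ReflTransGen.head
      (Or.inl ⟨k, GlobeCell.s (k+1) (by omega), rfl, rfl⟩)
      (globe_le_s_s (k+1) j h1 hj)
termination_by k j hkj hj => j - k

lemma globe_le_t_t : ∀ k j (hkj : k ≤ j) (hj : j < N),
    (globe N).cellLE ⟨j, .t j hj⟩ ⟨k, .t k (lt_of_le_of_lt hkj hj)⟩ := by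
  intro k j hkj hj
  rcases Nat.eq_or_lt_of_le hkj with rfl | hlt
  · exact Relation.ReflTransGen.refl
  · have h1 : k + 1 ≤ j := hlt
    exact Relation.ReflTransGen.tail
      (globe_le_t_t (k+1) j h1 hj)
      (Or.inr ⟨k, GlobeCell.t (k+1) (by omega), rfl, rfl⟩)
termination_by k j hkj hj => j - k

lemma globe_total (a b : Σ k, (globe N).cells k) :
    (globe N).cellLE a b ∨ (globe N).cellLE b a := by
  obtain ⟨k, c⟩ := a
  obtain ⟨j, d⟩ := b
  cases c with
  | s hk =>
    cases d with
    | s hj =>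
      rcases Nat.le_total k j with hkj | hkj
      · exact Or.inl (globe_le_s_s N k j hkj hj)
      · exact Or.inr (globe_le_s_s N j k hkj hk)
    | t hj => exact Or.inl ((globe_le_s_top N k hk).trans (globe_le_top_t N j hj))
    | top hj => rw [globe_top_sigma N hj]; exact Or.inl (globe_le_s_top N k hk)
  | t hk =>
    cases d with
    | s hj => exact Or.inr ((globe_le_s_top N j hj).trans (globe_le_top_t N k hk))
    | t hj =>
      rcases Nat.le_total k j with hkj | hkj
      · exact Or.inr (globe_le_t_t N k j hkj hj)
      · exact Or.inl (globe_le_t_t N j k hkj hk)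
    | top hj => rw [globe_top_sigma N hj]; exact Or.inr (globe_le_top_t N k hk)
  | top hk =>
    rw [globe_top_sigma N hk]
    cases d with
    | s hj => exact Or.inr (globe_le_s_top N j hj)
    | t hj => exact Or.inl (globe_le_top_t N j hj)
    | top hj => rw [globe_top_sigma N hj]; exact Or.inl Relation.ReflTransGen.refl

theorem globe_isTree : (globe N).IsTree :=
  ⟨⟨⟨N, globeTop N⟩⟩, inferInstance, globe_total N, fun _ _ => globe_antisymm N⟩

end OmegaGraph

/-- The globe as an object of `Θ₀`. -/
abbrev Glb (n : ℕ) : TreeCat := ⟨globe n, OmegaGraph.globe_isTree n⟩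
open OmegaGraph in
/-- The classifier as a morphism in `Θ₀`. -/
def clsT {T : TreeCat} {n : ℕ} (c : T.obj.cells n) : Glb n ⟶ T :=
  ⟨OmegaGraph.cls c⟩

@[simp] lemma clsT_app_top {T : TreeCat} {n : ℕ} (c : T.obj.cells n) :
    (clsT c).hom.app n (OmegaGraph.globeTop n) = c := rfl

lemma treeCat_comp_app {T T' T'' : TreeCat} (f : T ⟶ T') (g : T' ⟶ T'') (n : ℕ)
    (x : T.obj.cells n) : (f ≫ g).hom.app n x = g.hom.app n (f.hom.app n x) := rfl

lemma clsT_naturality {T T' : TreeCat} (f : T ⟶ T') {n : ℕ} (c : T.obj.cells n) :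
    clsT (f.hom.app n c) = clsT c ≫ f :=
  InducedCategory.hom_ext (OmegaGraph.cls_naturality f.hom c)

lemma globe_hom_extT {T : TreeCat} {n : ℕ} (f g : Glb n ⟶ T)
    (h : f.hom.app n (OmegaGraph.globeTop n) = g.hom.app n (OmegaGraph.globeTop n)) : f = g :=
  InducedCategory.hom_ext (OmegaGraph.globe_hom_ext_s8 f.hom g.hom h)

section SheafCond

variable (J : GrothendieckTopology TreeCat)
variable (hJ : ∀ (T : TreeCat) (S : Sieve T), S ∈ J T ↔ CoveringSieve T S)

include hJ in
theorem treeHom_isSheaf (X : OmegaGraph) :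
    Presieve.IsSheaf J (treeHomFunctor.obj X) := by
  intro T S hS x hx
  have hcov : CoveringSieve T S := (hJ T S).mp hS
  -- well-definedness
  have key : ∀ {n : ℕ} {W W' : TreeCat} (f : W ⟶ T) (f' : W' ⟶ T)
      (hf : S.arrows f) (hf' : S.arrows f') (y : W.obj.cells n) (y' : W'.obj.cells n),
      f.hom.app n y = f'.hom.app n y' → (x f hf).app n y = (x f' hf').app n y' := by
    intro n W W' f f' hf hf' y y' hyy
    have hcomm : clsT y ≫ f = clsT y' ≫ f' := by
      apply globe_hom_extT
      rw [treeCat_comp_app, treeCat_comp_app, clsT_app_top, clsT_app_top]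
      exact hyy
    have := hx (clsT y) (clsT y') hf hf' hcomm
    have h2 := congrArg (fun u : ((Glb n).obj ⟶ X) => u.app n (OmegaGraph.globeTop n)) this
    exact h2
  -- data from the covering
  choose W f hf y hy using hcov
  refine ⟨{ app := fun n c => (x (f n c) (hf n c)).app n (y n c)
            app_src := ?_
            app_tgt := ?_ }, ?_, ?_⟩
  · intro n c
    dsimp only
    have h1 : (f n (T.obj.src n c)).hom.app n (y n (T.obj.src n c))
        = (f (n+1) c).hom.app n ((W (n+1) c).obj.src n (y (n+1) c)) := by
      rw [hy, (f (n+1) c).hom.app_src, hy]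
    rw [key _ _ (hf n (T.obj.src n c)) (hf (n+1) c) _ _ h1,
      (x (f (n+1) c) (hf (n+1) c)).app_src]
  · intro n c
    dsimp only
    have h1 : (f n (T.obj.tgt n c)).hom.app n (y n (T.obj.tgt n c))
        = (f (n+1) c).hom.app n ((W (n+1) c).obj.tgt n (y (n+1) c)) := by
      rw [hy, (f (n+1) c).hom.app_tgt, hy]
    rw [key _ _ (hf n (T.obj.tgt n c)) (hf (n+1) c) _ _ h1,
      (x (f (n+1) c) (hf (n+1) c)).app_tgt]
  · intro V g hg
    apply OmegaGraph.Hom.ext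
    funext n v
    exact key (f n (g.hom.app n v)) g (hf n (g.hom.app n v)) hg _ v (hy n (g.hom.app n v))
  · intro u' hu'
    apply OmegaGraph.Hom.ext
    funext n c
    have := congrArg (fun w : ((W n c).obj ⟶ X) => w.app n (y n c)) (hu' (f n c) (hf n c))
    dsimp only at this
    calc u'.app n c = u'.app n ((f n c).hom.app n (y n c)) := by rw [hy]
      _ = (x (f n c) (hf n c)).app n (y n c) := this
      _ = _ := rfl

end SheafCond
/-- Source coface in `Θ₀`. -/
def globeSrcT (n : ℕ) : Glb n ⟶ Glb (n+1) := ⟨OmegaGraph.globeSrc n⟩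

/-- Target coface in `Θ₀`. -/
def globeTgtT (n : ℕ) : Glb n ⟶ Glb (n+1) := ⟨OmegaGraph.globeTgt n⟩

section FunctorDef

variable (J : GrothendieckTopology TreeCat)
variable (hJ : ∀ (T : TreeCat) (S : Sieve T), S ∈ J T ↔ CoveringSieve T S)

/-- The functor `X ↦ Hom(-, X)` into sheaves. -/
def homSheafFunctor : OmegaGraph ⥤ Sheaf J Type where
  obj X := ⟨treeHomFunctor.obj X, by
    rw [isSheaf_iff_isSheaf_of_type]; exact treeHom_isSheaf J hJ X⟩
  map f := ⟨treeHomFunctor.map f⟩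
  map_id X := Sheaf.hom_ext (treeHomFunctor.map_id X)
  map_comp f g := Sheaf.hom_ext (treeHomFunctor.map_comp f g)

theorem homSheafFunctor_faithful : (homSheafFunctor J hJ).Faithful := by
  constructor
  intro X Y f g h
  have h' : treeHomFunctor.map f = treeHomFunctor.map g := congrArg (fun φ => φ.hom) h
  apply OmegaGraph.Hom.ext
  funext n x
  have h2 := congrArg (fun α : (treeHomFunctor.obj X ⟶ treeHomFunctor.obj Y) =>
    α.app (op (Glb n)) (OmegaGraph.cls x)) h'
  have h3 := congrArg (fun u : ((Glb n).obj ⟶ Y) => u.app n (OmegaGraph.globeTop n)) h2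
  exact h3

theorem homSheafFunctor_full : (homSheafFunctor J hJ).Full := by
  constructor
  intro X Y α'
  obtain ⟨α⟩ := α'
  refine ⟨{ app := fun n x => (α.app (op (Glb n)) (OmegaGraph.cls x)).app n (OmegaGraph.globeTop n)
            app_src := ?_
            app_tgt := ?_ }, ?_⟩
  · intro n x
    dsimp only
    have hnat := NatTrans.naturality_apply α ((globeSrcT n).op)
      (show ((homSheafFunctor J hJ).obj X).val.obj (op (Glb (n+1))) from OmegaGraph.cls x)
    have harg : ((homSheafFunctor J hJ).obj X).val.map (globeSrcT n).op
        (show ((homSheafFunctor J hJ).obj X).val.obj (op (Glb (n+1))) from OmegaGraph.cls x)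
        = (show ((homSheafFunctor J hJ).obj X).val.obj (op (Glb n)) from
            OmegaGraph.cls (X.src n x)) :=
      (OmegaGraph.cls_src x).symm
    erw [harg] at hnat
    show (α.app (op (Glb n)) (show ((homSheafFunctor J hJ).obj X).val.obj (op (Glb n)) from
      OmegaGraph.cls (X.src n x))).app n (OmegaGraph.globeTop n) = _
    rw [hnat]
    have hw := (OmegaGraph.globe_hom_app_st (show globe (n+1) ⟶ Y from
      α.app (op (Glb (n+1)))
        (show ((homSheafFunctor J hJ).obj X).val.obj (op (Glb (n+1))) from OmegaGraph.cls x)) n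
      (Nat.lt_succ_self n)).1
    rw [Y.sIter_succ_self] at hw
    exact hw
  · intro n x
    dsimp only
    have hnat := NatTrans.naturality_apply α ((globeTgtT n).op)
      (show ((homSheafFunctor J hJ).obj X).val.obj (op (Glb (n+1))) from OmegaGraph.cls x)
    have harg : ((homSheafFunctor J hJ).obj X).val.map (globeTgtT n).op
        (show ((homSheafFunctor J hJ).obj X).val.obj (op (Glb (n+1))) from OmegaGraph.cls x)
        = (show ((homSheafFunctor J hJ).obj X).val.obj (op (Glb n)) from
            OmegaGraph.cls (X.tgt n x)) :=
      (OmegaGraph.cls_tgt x).symm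
    erw [harg] at hnat
    show (α.app (op (Glb n)) (show ((homSheafFunctor J hJ).obj X).val.obj (op (Glb n)) from
      OmegaGraph.cls (X.tgt n x))).app n (OmegaGraph.globeTop n) = _
    rw [hnat]
    have hw := (OmegaGraph.globe_hom_app_st (show globe (n+1) ⟶ Y from
      α.app (op (Glb (n+1)))
        (show ((homSheafFunctor J hJ).obj X).val.obj (op (Glb (n+1))) from OmegaGraph.cls x)) n
      (Nat.lt_succ_self n)).2
    rw [Y.tIter_succ_self] at hw
    exact hw
  · apply Sheaf.hom_ext
    apply NatTrans.ext
    funext T; ext u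
    apply OmegaGraph.Hom.ext
    funext n c
    obtain ⟨T⟩ := T
    have hnat := NatTrans.naturality_apply α ((clsT c : Glb n ⟶ ⟨T.obj, T.property⟩).op) u
    have harg : ((homSheafFunctor J hJ).obj X).val.map
          (clsT c : Glb n ⟶ ⟨T.obj, T.property⟩).op u
        = (show ((homSheafFunctor J hJ).obj X).val.obj (op (Glb n)) from
            OmegaGraph.cls (u.app n c)) :=
      (OmegaGraph.cls_naturality u c).symm
    erw [harg] at hnat
    show (α.app (op (Glb n)) (show ((homSheafFunctor J hJ).obj X).val.obj (op (Glb n)) from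
      OmegaGraph.cls (u.app n c))).app n (OmegaGraph.globeTop n) = _
    rw [hnat]
    rfl

end FunctorDef
lemma clsT_top (n : ℕ) : (clsT (OmegaGraph.globeTop n) : Glb n ⟶ Glb n) = 𝟙 (Glb n) := by
  apply globe_hom_extT
  rfl

lemma globe_coface_ss (n : ℕ) :
    globeSrcT n ≫ globeSrcT (n+1) = globeSrcT n ≫ globeTgtT (n+1) := by
  apply globe_hom_extT
  rw [treeCat_comp_app, treeCat_comp_app]
  show (OmegaGraph.cls (X := globe (n+2)) (N := n+1)
      (GlobeCell.s (n+1) (Nat.lt_succ_self (n+1)))).app n (GlobeCell.s n (Nat.lt_succ_self n)) =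
    (OmegaGraph.cls (X := globe (n+2)) (N := n+1)
      (GlobeCell.t (n+1) (Nat.lt_succ_self (n+1)))).app n (GlobeCell.s n (Nat.lt_succ_self n))
  erw [OmegaGraph.cls_app_s, OmegaGraph.cls_app_s, OmegaGraph.sIter_succ_self,
    OmegaGraph.sIter_succ_self]
  rfl

lemma globe_coface_tt (n : ℕ) :
    globeTgtT n ≫ globeSrcT (n+1) = globeTgtT n ≫ globeTgtT (n+1) := by
  apply globe_hom_extT
  rw [treeCat_comp_app, treeCat_comp_app]
  show (OmegaGraph.cls (X := globe (n+2)) (N := n+1)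
      (GlobeCell.s (n+1) (Nat.lt_succ_self (n+1)))).app n (GlobeCell.t n (Nat.lt_succ_self n)) =
    (OmegaGraph.cls (X := globe (n+2)) (N := n+1)
      (GlobeCell.t (n+1) (Nat.lt_succ_self (n+1)))).app n (GlobeCell.t n (Nat.lt_succ_self n))
  erw [OmegaGraph.cls_app_t, OmegaGraph.cls_app_t, OmegaGraph.tIter_succ_self,
    OmegaGraph.tIter_succ_self]
  rfl

/-- The `ω`-graph of globular elements of a presheaf on `Θ₀`. -/
def sheafGraph (P : TreeCatᵒᵖ ⥤ Type) : OmegaGraph where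
  cells n := P.obj (op (Glb n))
  src n := P.map (globeSrcT n).op
  tgt n := P.map (globeTgtT n).op
  src_src n x := by
    show P.map (globeSrcT n).op (P.map (globeSrcT (n+1)).op x)
      = P.map (globeSrcT n).op (P.map (globeTgtT (n+1)).op x)
    rw [← FunctorToTypes.map_comp_apply, ← FunctorToTypes.map_comp_apply, ← op_comp, ← op_comp,
      globe_coface_ss]
  tgt_tgt n x := by
    show P.map (globeTgtT n).op (P.map (globeSrcT (n+1)).op x)
      = P.map (globeTgtT n).op (P.map (globeTgtT (n+1)).op x)
    rw [← FunctorToTypes.map_comp_apply, ← FunctorToTypes.map_comp_apply, ← op_comp, ← op_comp,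
      globe_coface_tt]

/-- Restriction of a globular element of a presheaf along globe cells. -/
theorem sheafGraph_map_cls (P : TreeCatᵒᵖ ⥤ Type) (Y : OmegaGraph) (u : Y ⟶ sheafGraph P) :
    ∀ (n : ℕ) (c : Y.cells n) (m : ℕ) (d : GlobeCell n m),
      P.map (clsT (T := Glb n) d).op (u.app n c) = u.app m ((OmegaGraph.cls c).app m d) := by
  intro n c m d
  cases d with
  | top h =>
    have key : ∀ (h' : m = n),
        P.map (clsT (T := Glb n) (GlobeCell.top m h')).op (u.app n c)
          = u.app m ((OmegaGraph.cls c).app m (GlobeCell.top m h')) := by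
      rintro rfl
      rw [clsT_top, op_id, P.map_id]
      rfl
    exact key h
  | s h =>
    obtain ⟨e, he⟩ : ∃ e : GlobeCell n (m+1), GlobeCell.s m h = (globe n).src m e := by
      by_cases hm : m + 1 = n
      · exact ⟨.top (m+1) hm, rfl⟩
      · exact ⟨.s (m+1) (by omega), rfl⟩
    have h2 : (clsT (T := Glb n) (GlobeCell.s m h) : Glb m ⟶ Glb n)
        = globeSrcT m ≫ clsT (T := Glb n) e := by
      rw [show (GlobeCell.s m h) = (globe n).src m e from he]
      exact InducedCategory.hom_ext (OmegaGraph.cls_src (X := globe n) e)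
    erw [h2, op_comp, FunctorToTypes.map_comp_apply]
    rw [sheafGraph_map_cls P Y u n c (m+1) e]
    have h3 : u.app m (Y.src m ((OmegaGraph.cls c).app (m+1) e))
        = P.map (globeSrcT m).op (u.app (m+1) ((OmegaGraph.cls c).app (m+1) e)) :=
      u.app_src m ((OmegaGraph.cls c).app (m+1) e)
    rw [← h3]
    congr 1
    rw [show (GlobeCell.s m h) = (globe n).src m e from he]
    exact ((OmegaGraph.cls c).app_src m e).symm
  | t h =>
    obtain ⟨e, he⟩ : ∃ e : GlobeCell n (m+1), GlobeCell.t m h = (globe n).tgt m e := by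
      by_cases hm : m + 1 = n
      · exact ⟨.top (m+1) hm, rfl⟩
      · exact ⟨.t (m+1) (by omega), rfl⟩
    have h2 : (clsT (T := Glb n) (GlobeCell.t m h) : Glb m ⟶ Glb n)
        = globeTgtT m ≫ clsT (T := Glb n) e := by
      rw [show (GlobeCell.t m h) = (globe n).tgt m e from he]
      exact InducedCategory.hom_ext (OmegaGraph.cls_tgt (X := globe n) e)
    erw [h2, op_comp, FunctorToTypes.map_comp_apply]
    rw [sheafGraph_map_cls P Y u n c (m+1) e]
    have h3 : u.app m (Y.tgt m ((OmegaGraph.cls c).app (m+1) e))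
        = P.map (globeTgtT m).op (u.app (m+1) ((OmegaGraph.cls c).app (m+1) e)) :=
      u.app_tgt m ((OmegaGraph.cls c).app (m+1) e)
    rw [← h3]
    congr 1
    rw [show (GlobeCell.t m h) = (globe n).tgt m e from he]
    exact ((OmegaGraph.cls c).app_tgt m e).symm
termination_by n _ m _ => n - m

/-- The sieve of morphisms factoring through a globe classifier. -/
def globSieve (T : TreeCat) : Sieve T where
  arrows W g := ∃ (n : ℕ) (c : T.obj.cells n) (k : W ⟶ Glb n), g = k ≫ clsT c
  downward_closed := by
    rintro W V g ⟨n, c, k, rfl⟩ e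
    exact ⟨n, c, e ≫ k, (Category.assoc _ _ _).symm⟩

section EssSurj

variable (J : GrothendieckTopology TreeCat)
variable (hJ : ∀ (T : TreeCat) (S : Sieve T), S ∈ J T ↔ CoveringSieve T S)

include hJ in
lemma globSieve_mem (T : TreeCat) : globSieve T ∈ J T :=
  (hJ T _).mpr fun n x =>
    ⟨Glb n, clsT x, ⟨n, x, 𝟙 _, (Category.id_comp _).symm⟩, OmegaGraph.globeTop n, rfl⟩

include hJ in
lemma sheaf_sep (P : TreeCatᵒᵖ ⥤ Type) (hP : Presieve.IsSheaf J P) (T : TreeCat)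
    (a b : P.obj (op T))
    (h : ∀ n (c : T.obj.cells n), P.map (clsT c).op a = P.map (clsT c).op b) : a = b := by
  have hs := hP (globSieve T) (globSieve_mem J hJ T)
  let x : Presieve.FamilyOfElements P (globSieve T).arrows := fun W g _ => P.map g.op a
  have hcomp : Presieve.FamilyOfElements.Compatible x := by
    intro Y₁ Y₂ Z g₁ g₂ f₁ f₂ h₁ h₂ hc
    show P.map g₁.op (P.map f₁.op a) = P.map g₂.op (P.map f₂.op a)
    rw [← FunctorToTypes.map_comp_apply, ← FunctorToTypes.map_comp_apply, ← op_comp, ← op_comp, hc]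
  obtain ⟨t, _, hu⟩ := hs _ hcomp
  have ha : Presieve.FamilyOfElements.IsAmalgamation x a :=
    fun W g _ => rfl
  have hb : Presieve.FamilyOfElements.IsAmalgamation x b := by
    rintro W g ⟨n, c, k, rfl⟩
    show P.map (k ≫ clsT c).op b = P.map (k ≫ clsT c).op a
    rw [op_comp, FunctorToTypes.map_comp_apply, FunctorToTypes.map_comp_apply, h]
  rw [hu a ha, hu b hb]

/-- The canonical morphism associated to a section of a presheaf over a tree. -/
def sheafGraphHom (P : TreeCatᵒᵖ ⥤ Type) {T : TreeCat} (p : P.obj (op T)) :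
    T.obj ⟶ sheafGraph P where
  app n c := P.map (clsT c).op p
  app_src n c := by
    show P.map (clsT (T.obj.src n c)).op p = P.map (globeSrcT n).op (P.map (clsT c).op p)
    rw [← FunctorToTypes.map_comp_apply, ← op_comp,
      show (clsT (T.obj.src n c) : Glb n ⟶ T) = globeSrcT n ≫ clsT c from
        InducedCategory.hom_ext (OmegaGraph.cls_src c)]
  app_tgt n c := by
    show P.map (clsT (T.obj.tgt n c)).op p = P.map (globeTgtT n).op (P.map (clsT c).op p)
    rw [← FunctorToTypes.map_comp_apply, ← op_comp,
      show (clsT (T.obj.tgt n c) : Glb n ⟶ T) = globeTgtT n ≫ clsT c from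
        InducedCategory.hom_ext (OmegaGraph.cls_tgt c)]

include hJ in
lemma sheafGraphHom_bijective (P : TreeCatᵒᵖ ⥤ Type) (hP : Presieve.IsSheaf J P) (T : TreeCat) :
    Function.Bijective (sheafGraphHom P (T := T)) := by
  constructor
  · intro p p' hpp
    apply sheaf_sep J hJ P hP T
    intro n c
    exact congrArg (fun u : T.obj ⟶ sheafGraph P => u.app n c) hpp
  · intro u
    have WD : ∀ {W : TreeCat} {n n' : ℕ} (c : T.obj.cells n) (c' : T.obj.cells n')
        (k : W ⟶ Glb n) (k' : W ⟶ Glb n'), k ≫ clsT c = k' ≫ clsT c' →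
        P.map k.op (u.app n c) = P.map k'.op (u.app n' c') := by
      intro W n n' c c' k k' hcomm
      apply sheaf_sep J hJ P hP W
      intro m d
      erw [← FunctorToTypes.map_comp_apply, ← op_comp, ← FunctorToTypes.map_comp_apply, ← op_comp]
      have e1 : (clsT d ≫ k : Glb m ⟶ Glb n) = clsT (T := Glb n) (k.hom.app m d) := by
        apply globe_hom_extT; rfl
      have e2 : (clsT d ≫ k' : Glb m ⟶ Glb n') = clsT (T := Glb n') (k'.hom.app m d) := by
        apply globe_hom_extT; rfl
      rw [e1, e2, sheafGraph_map_cls P T.obj u n c m (k.hom.app m d),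
        sheafGraph_map_cls P T.obj u n' c' m (k'.hom.app m d)]
      congr 1
      have := congrArg (fun g : W ⟶ T => g.hom.app m d) hcomm
      exact this
    classical
    have hex : ∀ (W : TreeCat) (g : W ⟶ T), (globSieve T).arrows g →
        ∃ q : P.obj (op W), ∀ {n : ℕ} (c : T.obj.cells n) (k : W ⟶ Glb n),
          g = k ≫ clsT c → q = P.map k.op (u.app n c) := by
      rintro W g ⟨n, c, k, rfl⟩
      refine ⟨P.map k.op (u.app n c), fun {n'} c' k' h' => ?_⟩
      exact WD c c' k k' h'
    choose x hx using hex
    have hcomp : Presieve.FamilyOfElements.Compatible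
        (x : Presieve.FamilyOfElements P (globSieve T).arrows) := by
      intro Y₁ Y₂ Z g₁ g₂ f₁ f₂ h₁ h₂ hcomm
      obtain ⟨n₁, c₁, k₁, hk₁⟩ := id h₁
      obtain ⟨n₂, c₂, k₂, hk₂⟩ := id h₂
      show P.map g₁.op (x Y₁ f₁ h₁) = P.map g₂.op (x Y₂ f₂ h₂)
      rw [hx Y₁ f₁ h₁ c₁ k₁ hk₁, hx Y₂ f₂ h₂ c₂ k₂ hk₂]
      erw [← FunctorToTypes.map_comp_apply, ← op_comp, ← FunctorToTypes.map_comp_apply, ← op_comp]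
      apply WD
      rw [Category.assoc, Category.assoc, ← hk₁, ← hk₂]
      exact hcomm
    obtain ⟨p, hp, -⟩ := hP (globSieve T) (globSieve_mem J hJ T) _ hcomp
    refine ⟨p, ?_⟩
    apply OmegaGraph.Hom.ext
    funext n c
    show P.map (clsT c).op p = u.app n c
    have hmem : (globSieve T).arrows (clsT c : Glb n ⟶ T) :=
      ⟨n, c, 𝟙 _, (Category.id_comp _).symm⟩
    have h5 : P.map (clsT (T := T) c).op p = x (Glb n) (clsT c) hmem := hp (clsT c) hmem
    rw [h5, hx (Glb n) (clsT c) hmem c (𝟙 _) (Category.id_comp _).symm, op_id, P.map_id]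
    rfl

end EssSurj
section Assembly

variable (J : GrothendieckTopology TreeCat)
variable (hJ : ∀ (T : TreeCat) (S : Sieve T), S ∈ J T ↔ CoveringSieve T S)

/-- The natural transformation `P ⟶ Hom(-, sheafGraph P)`. -/
def sheafGraphNat (P : TreeCatᵒᵖ ⥤ Type) : P ⟶ treeHomFunctor.obj (sheafGraph P) where
  app T := TypeCat.ofHom fun p => sheafGraphHom P (T := T.unop) p
  naturality T T' g := by
    apply ConcreteCategory.ext_apply; intro p
    show sheafGraphHom P (T := T'.unop) (P.map g p)
      = (treeHomFunctor.obj (sheafGraph P)).map g (sheafGraphHom P (T := T.unop) p)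
    apply OmegaGraph.Hom.ext
    funext n c
    show P.map (clsT c).op (P.map g p) = P.map (clsT (g.unop.hom.app n c)).op p
    rw [show (clsT (g.unop.hom.app n c) : Glb n ⟶ T.unop) = clsT c ≫ g.unop from
      clsT_naturality g.unop c]
    rw [← FunctorToTypes.map_comp_apply]
    congr 1

include hJ in
theorem homSheafFunctor_essSurj : (homSheafFunctor J hJ).EssSurj := by
  constructor
  intro P
  have hP : Presieve.IsSheaf J P.val := (isSheaf_iff_isSheaf_of_type J P.val).mp P.cond
  refine ⟨sheafGraph P.val, ⟨?_⟩⟩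
  have hiso : ∀ T : TreeCatᵒᵖ, IsIso ((sheafGraphNat P.val).app T) := by
    intro T
    rw [isIso_iff_bijective]
    exact sheafGraphHom_bijective J hJ P.val hP T.unop
  haveI : IsIso (sheafGraphNat P.val) := @NatIso.isIso_of_isIso_app _ _ _ _ _ _ _ hiso
  exact { hom := ⟨@inv _ _ _ _ (sheafGraphNat P.val) this⟩
          inv := ⟨sheafGraphNat P.val⟩
          hom_inv_id := Sheaf.hom_ext (IsIso.inv_hom_id (sheafGraphNat P.val))
          inv_hom_id := Sheaf.hom_ext (IsIso.hom_inv_id (sheafGraphNat P.val)) }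

end Assembly
/-- The category of `ω`-graphs is canonically equivalent to the category of sheaves of
sets on the category `Θ₀` of trees, for the Grothendieck topology whose covering sieves
are generated by the epimorphic families; the equivalence sends an `ω`-graph `X` to the
sheaf `T ↦ Hom_{ωGraph}(T, X)`. -/
theorem omegaGraph_equiv_sheaves
    (J : GrothendieckTopology TreeCat)
    (hJ : ∀ (T : TreeCat) (S : Sieve T), S ∈ J T ↔ CoveringSieve T S) :
    Nonempty (Σ' E : OmegaGraph ≌ Sheaf J (Type),
      E.functor ⋙ sheafToPresheaf J (Type) ≅ treeHomFunctor) := by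
  letI := homSheafFunctor_faithful J hJ
  letI := homSheafFunctor_full J hJ
  letI := homSheafFunctor_essSurj J hJ
  letI : (homSheafFunctor J hJ).IsEquivalence := { }
  exact ⟨⟨(homSheafFunctor J hJ).asEquivalence, Iso.refl _⟩⟩
end

section
/- For any non-linear tree T, the continuous map |∂Θ_B[T]|_B → |Θ_B[T]|_B = B^T_top induced by the boundary inclusion is a homeomorphism. -/
open CategoryTheory CategoryTheory.Limits

/-- Surjectivity (on cells) of a map of `ω`-graphs; a map of trees has proper image
exactly when it is not surjective. -/
def OmegaGraph.HomSurj {X Y : OmegaGraph} (f : X ⟶ Y) : Prop :=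
  ∀ (n : ℕ) (y : Y.cells n), ∃ x, f.app n x = y

/-- The category of globular (linear) elements of a tree `T` in `Θ₀`: maps from linear
trees into `T`. -/
structure LinearInto (T : TreeCat) : Type 1 where
  L : TreeCat
  lin : L.obj.IsLinear
  f : L ⟶ T

instance (T : TreeCat) : Category (LinearInto T) where
  Hom a b := { g : a.L ⟶ b.L // g ≫ b.f = a.f }
  id a := ⟨𝟙 _, Category.id_comp _⟩
  comp g h := ⟨g.1 ≫ h.1, by rw [Category.assoc, h.2, g.2]⟩
  id_comp _ := Subtype.ext (Category.id_comp _)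
  comp_id _ := Subtype.ext (Category.comp_id _)
  assoc _ _ _ := Subtype.ext (Category.assoc _ _ _)

/-- The diagram of realizations of the globular elements of `T`. -/
@[simps]
def linearIntoDiagram (R : TreeCat ⥤ TopCat) (T : TreeCat) : LinearInto T ⥤ TopCat where
  obj a := R.obj a.L
  map g := R.map g.1
  map_id _ := R.map_id _
  map_comp _ _ := R.map_comp _ _

/-- The canonical cocone, with apex `R(T) = B^T_top`, on the realizations of the
globular elements of `T`; it being a colimit expresses `B^T_top = colim_{n̄ → T} B^n_top`. -/
@[simps]
def linearIntoCocone (R : TreeCat ⥤ TopCat) (T : TreeCat) :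
    Limits.Cocone (linearIntoDiagram R T) where
  pt := R.obj T
  ι := { app := fun a => R.map a.f
         naturality := fun a b g => by
           dsimp [linearIntoDiagram]
           rw [← R.map_comp, g.2, Category.comp_id] }

/-- The category of elements of the boundary `∂T` of a tree `T`: the maps of trees into
`T` with proper image (i.e. factoring through a proper subtree), so that the topological
realization of `∂Θ_B[T]` is the colimit of the realizations over this category. -/
structure BoundaryElem (T : TreeCat) : Type 1 where
  W : TreeCat
  f : W ⟶ T
  proper : ¬OmegaGraph.HomSurj f.hom

instance (T : TreeCat) : Category (BoundaryElem T) where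
  Hom a b := { g : a.W ⟶ b.W // g ≫ b.f = a.f }
  id a := ⟨𝟙 _, Category.id_comp _⟩
  comp g h := ⟨g.1 ≫ h.1, by rw [Category.assoc, h.2, g.2]⟩
  id_comp _ := Subtype.ext (Category.id_comp _)
  comp_id _ := Subtype.ext (Category.comp_id _)
  assoc _ _ _ := Subtype.ext (Category.assoc _ _ _)

/-- The diagram of realizations of the boundary elements of `T`; its colimit is
`|∂Θ_B[T]|_B`. -/
@[simps]
def boundaryDiagram (R : TreeCat ⥤ TopCat) (T : TreeCat) : BoundaryElem T ⥤ TopCat where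
  obj a := R.obj a.W
  map g := R.map g.1
  map_id _ := R.map_id _
  map_comp _ _ := R.map_comp _ _

/-- The canonical cocone with apex `R(T) = B^T_top` on the boundary diagram; it being a
colimit says exactly that the canonical continuous map `|∂Θ_B[T]|_B ⟶ |Θ_B[T]|_B`
is a homeomorphism. -/
@[simps]
def boundaryCocone (R : TreeCat ⥤ TopCat) (T : TreeCat) :
    Limits.Cocone (boundaryDiagram R T) where
  pt := R.obj T
  ι := { app := fun a => R.map a.f
         naturality := fun a b g => by
           dsimp [boundaryDiagram]
           rw [← R.map_comp, g.2, Category.comp_id] }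

/-- In a tree, the source and target of any cell are distinct. -/
lemma tree_src_ne_tgt {X : OmegaGraph} (hX : X.IsTree) (n : ℕ) (x : X.cells (n + 1)) :
    X.src n x ≠ X.tgt n x := by
  intro h
  have h1 : X.cellLE ⟨n, X.src n x⟩ ⟨n + 1, x⟩ :=
    Relation.ReflTransGen.single (Or.inl ⟨n, x, rfl, rfl⟩)
  have h2 : X.cellLE ⟨n + 1, x⟩ ⟨n, X.src n x⟩ := by
    rw [h]; exact Relation.ReflTransGen.single (Or.inr ⟨n, x, rfl, rfl⟩)
  have := congrArg Sigma.fst (hX.2.2.2 _ _ h1 h2)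
  simp at this

/-- A tree receiving a surjective map from a globe is linear. -/
lemma surj_globe_linear {N : ℕ} {T : OmegaGraph} (hT : T.IsTree)
    (h : globe N ⟶ T) (hs : OmegaGraph.HomSurj h) : T.IsLinear := by
  -- the images of the source and target cells in each dimension are distinct
  have hst : ∀ (k : ℕ) (hk : k < N),
      h.app k (.s k hk) ≠ h.app k (.t k hk) := by
    intro k hk
    rcases Nat.lt_or_ge (k + 1) N with h' | h'
    · have hsrc : h.app k (.s k hk) = T.src k (h.app (k + 1) (.s (k + 1) h')) :=
        h.app_src k (.s (k + 1) h')
      have htgt : h.app k (.t k hk) = T.tgt k (h.app (k + 1) (.s (k + 1) h')) :=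
        h.app_tgt k (.s (k + 1) h')
      rw [hsrc, htgt]
      exact tree_src_ne_tgt hT _ _
    · have hEq : k + 1 = N := le_antisymm hk h'
      have hsrc : h.app k (.s k hk) = T.src k (h.app (k + 1) (.top (k + 1) hEq)) :=
        h.app_src k (.top (k + 1) hEq)
      have htgt : h.app k (.t k hk) = T.tgt k (h.app (k + 1) (.top (k + 1) hEq)) :=
        h.app_tgt k (.top (k + 1) hEq)
      rw [hsrc, htgt]
      exact tree_src_ne_tgt hT _ _
  -- h is injective on cells
  have hinj : ∀ (k : ℕ) (x y : GlobeCell N k), h.app k x = h.app k y → x = y := by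
    intro k x y hxy
    cases x with
    | s h1 =>
      cases y with
      | s h2 => rfl
      | t h2 => exact absurd hxy (hst k h1)
      | top h2 => omega
    | t h1 =>
      cases y with
      | s h2 => exact absurd hxy.symm (hst k h2)
      | t h2 => rfl
      | top h2 => omega
    | top h1 =>
      cases y with
      | s h2 => omega
      | t h2 => omega
      | top h2 => rfl
  -- so h is a bijection in each dimension
  let e : ∀ k, GlobeCell N k ≃ T.cells k := fun k =>
    Equiv.ofBijective (h.app k) ⟨fun x y => hinj k x y, hs k⟩
  have he : ∀ (k : ℕ) (x : GlobeCell N k), e k x = h.app k x := fun _ _ => rfl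
  have hsymm : ∀ (k : ℕ) (x : GlobeCell N k), (e k).symm (h.app k x) = x := by
    intro k x; exact (e k).symm_apply_apply x
  refine ⟨N, ⟨?_⟩⟩
  refine
    { hom := ⟨fun k y => (e k).symm y, ?_, ?_⟩
      inv := h
      hom_inv_id := ?_
      inv_hom_id := ?_ }
  · intro k y
    obtain ⟨x, hx⟩ := hs (k + 1) y
    subst hx
    rw [← h.app_src]
    exact (hsymm k _).trans (congrArg ((globe N).src k) (hsymm (k + 1) x).symm)
  · intro k y
    obtain ⟨x, hx⟩ := hs (k + 1) y
    subst hx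
    rw [← h.app_tgt]
    exact (hsymm k _).trans (congrArg ((globe N).tgt k) (hsymm (k + 1) x).symm)
  · apply OmegaGraph.Hom.ext
    funext k y
    obtain ⟨x, hx⟩ := hs k y
    subst hx
    show h.app k ((e k).symm (h.app k x)) = h.app k x
    exact congrArg (h.app k) (hsymm k x)
  · apply OmegaGraph.Hom.ext
    funext k x
    exact hsymm k x

/-- Any map from a linear tree into a non-linear tree is proper. -/
lemma linear_into_nonlinear_proper {T : TreeCat} (hnl : ¬T.obj.IsLinear)
    {L : TreeCat} (hL : L.obj.IsLinear) (f : L ⟶ T) : ¬OmegaGraph.HomSurj f.hom := by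
  intro hsurj
  obtain ⟨N, ⟨e⟩⟩ := hL
  apply hnl
  refine surj_globe_linear T.property (e.inv ≫ f.hom) ?_
  intro n y
  obtain ⟨x, hx⟩ := hsurj n y
  refine ⟨e.hom.app n x, ?_⟩
  show f.hom.app n (e.inv.app n (e.hom.app n x)) = y
  have : e.inv.app n (e.hom.app n x) = x :=
    congrFun (congrFun (congrArg OmegaGraph.Hom.app e.hom_inv_id) n) x
  rw [this, hx]

/-- Composing with a proper map yields a proper map. -/
lemma comp_proper {X Y Z : OmegaGraph} (g : X ⟶ Y) (f : Y ⟶ Z)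
    (hf : ¬OmegaGraph.HomSurj f) : ¬OmegaGraph.HomSurj (g ≫ f) := by
  intro hs
  apply hf
  intro n z
  obtain ⟨x, hx⟩ := hs n z
  exact ⟨g.app n x, hx⟩

/-- The restriction of a cocone on the boundary diagram to the linear-elements
diagram, for a non-linear tree. -/
@[simps]
def restrictCocone (R : TreeCat ⥤ TopCat) (T : TreeCat) (hnl : ¬T.obj.IsLinear)
    (c : Limits.Cocone (boundaryDiagram R T)) :
    Limits.Cocone (linearIntoDiagram R T) where
  pt := c.pt
  ι := { app := fun a =>
           c.ι.app ⟨a.L, a.f, linear_into_nonlinear_proper hnl a.lin a.f⟩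
         naturality := fun a b g => by
           have := c.ι.naturality
             (X := ⟨a.L, a.f, linear_into_nonlinear_proper hnl a.lin a.f⟩)
             (Y := ⟨b.L, b.f, linear_into_nonlinear_proper hnl b.lin b.f⟩)
             ⟨g.1, g.2⟩
           exact this }

/-- For any non-linear tree `T`, the canonical continuous map
`|∂Θ_B[T]|_B ⟶ |Θ_B[T]|_B = B^T_top` is a homeomorphism.  Here the topological
realization functor `R : Θ₀ ⟶ Top`, `T ↦ B^T_top`, underlying `|−|_B` is characterized
by the colimit formula `B^T_top = colim_{n̄ → T} B^n_top` (hypothesis `hglob`), and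
`|∂Θ_B[T]|_B` is the colimit of the realizations of the elements of `∂T`; the conclusion
states that the canonical cocone on this boundary diagram with apex `B^T_top` is a
colimit. -/
theorem boundary_realization_homeomorphism
    (R : TreeCat ⥤ TopCat)
    (hglob : ∀ T : TreeCat, Nonempty (Limits.IsColimit (linearIntoCocone R T)))
    (T : TreeCat) (hnl : ¬T.obj.IsLinear) :
    Nonempty (Limits.IsColimit (boundaryCocone R T)) := by
  refine ⟨{ desc := fun c => (hglob T).some.desc (restrictCocone R T hnl c)
            fac := ?_
            uniq := ?_ }⟩
  · intro c b
    -- both sides are maps out of R.obj b.W, which is a colimit over linear elements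
    apply (hglob b.W).some.hom_ext
    intro a
    have hfac := (hglob T).some.fac (restrictCocone R T hnl c)
      ⟨a.L, a.lin, a.f ≫ b.f⟩
    change R.map (a.f ≫ b.f) ≫ (hglob T).some.desc (restrictCocone R T hnl c) =
      c.ι.app ⟨a.L, a.f ≫ b.f, comp_proper a.f.hom b.f.hom b.proper⟩ at hfac
    change R.map a.f ≫ R.map b.f ≫ (hglob T).some.desc (restrictCocone R T hnl c) =
      R.map a.f ≫ c.ι.app b
    refine (Category.assoc _ _ _).symm.trans ?_
    refine (congrArg (· ≫ (hglob T).some.desc (restrictCocone R T hnl c))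
      (R.map_comp a.f b.f).symm).trans ?_
    refine hfac.trans ?_
    -- now use naturality of c for the boundary morphism a.f : (a.L, a.f ≫ b.f) ⟶ b
    have hnat := c.ι.naturality
      (X := ⟨a.L, a.f ≫ b.f, comp_proper a.f.hom b.f.hom b.proper⟩) (Y := b)
      ⟨a.f, rfl⟩
    dsimp at hnat
    rw [Category.comp_id] at hnat
    exact hnat.symm
  · intro c m hm
    apply (hglob T).some.hom_ext
    intro a
    refine Eq.trans ?_ ((hglob T).some.fac (restrictCocone R T hnl c) a).symm
    have := hm ⟨a.L, a.f, linear_into_nonlinear_proper hnl a.lin a.f⟩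
    exact this
end
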